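/- Let X be a real-valued stochastic process on [0,1] with independent increments such that every increment X(b) − X(a) for a < b has a non-atomic distribution, and let I₁ = [a₁, b₁] and I₂ = [a₂, b₂] be disjoint closed subintervals of [0,1] with b₁ < a₂, and assume X has almost surely continuous paths. Then almost surely inf_{t ∈ I₁} X(t) ≠ inf_{t ∈ I₂} X(t). -/

import Mathlib

open MeasureTheory ProbabilityTheory

/-- A process on `[0,1]` with independent increments: for any monotone sequence of times
in `[0,1]`, the initial value together with the successive increments are independent. -/
def HasIndepIncrements {Ω : Type*} [MeasurableSpace Ω] (P : Measure Ω)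
    (X : ℝ → Ω → ℝ) : Prop :=
  ∀ (n : ℕ) (t : Fin (n + 1) → ℝ), Monotone t → (∀ i, t i ∈ Set.Icc (0:ℝ) 1) →
    iIndepFun
      (Fin.cases (motive := fun _ => Ω → ℝ) (fun ω => X (t 0) ω)
        (fun (i : Fin n) (ω : Ω) => X (t i.succ) ω - X (t i.castSucc) ω)) P

/-!
Let `D = X a₂ - X b₁` be the increment across the gap between the two intervals. On the event
of continuous paths, `inf_{I₁} X - X b₁` and `inf_{I₂} X - X a₂` are countable infima of
increments taken on either side of the gap, so their difference `Y` is independent of `D`, and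
the two infima of `X` coincide exactly when `D = Y`. As `D` has no atoms, `P {D = Y} = 0`.
-/

open Set

theorem sum_Ioc_increments_eq_sub {M : Type*} [AddCommGroup M] {N : ℕ} (g : Fin (N + 1) → M)
    {l k : Fin (N + 1)} (h : l ≤ k) :
    ∑ i ∈ Finset.Ioc l k,
        Fin.cases (motive := fun _ => M) (g 0) (fun i => g i.succ - g i.castSucc) i
      = g k - g l := by
  induction k using Fin.induction with
  | zero =>
    obtain rfl : l = 0 := le_antisymm h (Fin.zero_le _)
    simp
  | succ k ih =>
    rcases h.eq_or_lt with rfl | hlt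
    · simp
    · have hl : l ≤ k.castSucc := Fin.le_castSucc_iff.mpr hlt
      rw [← Fin.orderSucc_castSucc, ← Finset.insert_Ioc_right_eq_Ioc_succ_of_not_isMax hl
        (Fin.castSucc_lt_last k).not_isMax, Finset.sum_insert (by simp), Fin.orderSucc_castSucc,
        Fin.cases_succ, ih hl]
      abel

section Gap

variable {Ω : Type*} {X : ℝ → Ω → ℝ} {b a s : ℝ}

noncomputable def incrementFromGap (X : ℝ → Ω → ℝ) (b a s : ℝ) : Ω → ℝ :=
  X s - X (if s ≤ b then b else a)

noncomputable abbrev incrementsOffGap (X : ℝ → Ω → ℝ) (b a : ℝ) : MeasurableSpace Ω :=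
  ⨆ s ∈ Icc 0 b ∪ Icc a 1, MeasurableSpace.comap (incrementFromGap X b a s) inferInstance

theorem measurable_incrementFromGap (hs : s ∈ Icc 0 b ∪ Icc a 1) :
    Measurable[incrementsOffGap X b a] (incrementFromGap X b a s) :=
  (comap_measurable _).mono (le_iSup₂ (f := fun s (_ : s ∈ Icc 0 b ∪ Icc a 1) =>
    MeasurableSpace.comap (incrementFromGap X b a s) inferInstance) s hs) le_rfl

theorem measurable_incrementsOffGap_sub_left (hs : s ∈ Icc 0 b) :
    Measurable[incrementsOffGap X b a] (X s - X b) := by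
  simpa [incrementFromGap, hs.2] using measurable_incrementFromGap (X := X) (a := a) (Or.inl hs)

theorem measurable_incrementsOffGap_sub_right (hba : b < a) (hs : s ∈ Icc a 1) :
    Measurable[incrementsOffGap X b a] (X s - X a) := by
  simpa [incrementFromGap, not_le.2 (hba.trans_le hs.1)] using
    measurable_incrementFromGap (X := X) (b := b) (Or.inr hs)

theorem incrementsOffGap_le [MeasurableSpace Ω] (hmeas : ∀ t ∈ Icc (0:ℝ) 1, Measurable (X t))
    (hb : 0 ≤ b) (hba : b < a) (ha : a ≤ 1) : incrementsOffGap X b a ≤ ‹MeasurableSpace Ω› := by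
  have hb1 : b ∈ Icc (0:ℝ) 1 := ⟨hb, hba.le.trans ha⟩
  have ha1 : a ∈ Icc (0:ℝ) 1 := ⟨hb.trans hba.le, ha⟩
  refine iSup₂_le fun s hs => Measurable.comap_le ?_
  have hs1 : s ∈ Icc (0:ℝ) 1 :=
    hs.elim (fun h => ⟨h.1, h.2.trans hb1.2⟩) fun h => ⟨ha1.1.trans h.1, h.2⟩
  exact (hmeas s hs1).sub (hmeas _ (by split_ifs <;> assumption))

end Gap

namespace HasIndepIncrements

variable {Ω : Type*} [MeasurableSpace Ω] {P : Measure Ω} {X : ℝ → Ω → ℝ}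

theorem indep_increment_fin (hmeas : ∀ t ∈ Icc (0:ℝ) 1, Measurable (X t))
    (hindep : HasIndepIncrements P X) {N : ℕ} {t : Fin (N + 1) → ℝ} (ht : Monotone t)
    (ht01 : ∀ i, t i ∈ Icc (0:ℝ) 1) (j : Fin N) :
    Indep (⨆ k, MeasurableSpace.comap
        (X (t k) - X (t (if k ≤ j.castSucc then j.castSucc else j.succ))) inferInstance)
      (MeasurableSpace.comap (X (t j.succ) - X (t j.castSucc)) inferInstance) P := by
  set f : Fin (N + 1) → Ω → ℝ := Fin.cases (X (t 0)) (fun i => X (t i.succ) - X (t i.castSucc))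
  have hf_meas : ∀ i, Measurable (f i) := Fin.cases (hmeas _ (ht01 0))
    (fun i => (hmeas _ (ht01 _)).sub (hmeas _ (ht01 _)))
  have hI : iIndep (fun i => MeasurableSpace.comap (f i) inferInstance) P :=
    (iIndepFun_iff_iIndep _ _ _).1 (hindep N t ht ht01)
  set 𝓕 := ⨆ i ∈ ({j.succ}ᶜ : Set (Fin (N + 1))), MeasurableSpace.comap (f i) inferInstance
  have h : Indep 𝓕 (MeasurableSpace.comap (f j.succ) inferInstance) P := by
    simpa only [Set.mem_singleton_iff, iSup_iSup_eq_left] using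
      indep_iSup_of_disjoint (fun i => (hf_meas i).comap_le) hI
        (disjoint_compl_left (a := ({j.succ} : Set (Fin (N + 1)))))
  have hsum : ∀ s : Finset (Fin (N + 1)), j.succ ∉ s → Measurable[𝓕] (∑ i ∈ s, f i) := by
    intro s hs
    rw [Finset.sum_fn]
    exact Finset.measurable_sum s fun i hi => (comap_measurable (f i)).mono
      (le_iSup₂ (f := fun i (_ : i ∈ ({j.succ}ᶜ : Set _)) =>
        MeasurableSpace.comap (f i) inferInstance) i (by simpa using ne_of_mem_of_not_mem hi hs))
      le_rfl
  -- the recentred values telescope into sums of increments other than `f j.succ`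
  refine indep_of_indep_of_le_left h (iSup_le fun k => ?_)
  split_ifs with hk
  · have hrepr : X (t k) - X (t j.castSucc) = -∑ i ∈ Finset.Ioc k j.castSucc, f i := by
      rw [sum_Ioc_increments_eq_sub (fun i => X (t i)) hk, neg_sub]
    rw [hrepr]
    exact (hsum _ (by simp)).neg.comap_le
  · have hk' : j.succ ≤ k := Fin.castSucc_lt_iff_succ_le.1 (not_le.1 hk)
    rw [← sum_Ioc_increments_eq_sub (fun i => X (t i)) hk']
    exact (hsum _ (by simp)).comap_le

theorem indep_increment_finset (hmeas : ∀ t ∈ Icc (0:ℝ) 1, Measurable (X t))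
    (hindep : HasIndepIncrements P X) {b a : ℝ} (hb : 0 ≤ b) (hba : b < a) (ha : a ≤ 1)
    {F : Finset ℝ} (hbF : b ∈ F) (haF : a ∈ F) (hF : ∀ s ∈ F, s ∈ Icc 0 b ∪ Icc a 1) :
    Indep (⨆ s ∈ F, MeasurableSpace.comap (incrementFromGap X b a s) inferInstance)
      (MeasurableSpace.comap (X a - X b) inferInstance) P := by
  obtain ⟨N, hN⟩ : ∃ N, F.card = N + 1 := Nat.exists_eq_add_one.2 (Finset.card_pos.2 ⟨b, hbF⟩)
  set e := F.orderIsoOfFin hN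
  set t : Fin (N + 1) → ℝ := fun i => e i
  have ht : StrictMono t := fun i j h => e.strictMono h
  have htF : ∀ i, t i ∈ Icc 0 b ∪ Icc a 1 := fun i => hF _ (e i).2
  have ht01 : ∀ i, t i ∈ Icc (0:ℝ) 1 := fun i =>
    (union_subset (Icc_subset_Icc le_rfl (hba.le.trans ha))
      (Icc_subset_Icc (hb.trans hba.le) le_rfl)) (htF i)
  have hlt : e.symm ⟨b, hbF⟩ < e.symm ⟨a, haF⟩ := e.symm.strictMono hba
  obtain ⟨j, hj⟩ := Fin.exists_castSucc_eq.2 (Fin.ne_last_of_lt hlt)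
  have htb : t j.castSucc = b := by simp [t, hj]
  -- `b` and `a` are consecutive in `F`, since no point of `F` lies in the gap
  have hta : t j.succ = a := by
    refine le_antisymm ?_ ?_
    · have h := ht.monotone (Fin.castSucc_lt_iff_succ_le.1 (hj ▸ hlt))
      simpa [t] using h
    · have h := ht (Fin.castSucc_lt_succ (i := j))
      rw [htb] at h
      exact ((htF j.succ).resolve_left fun h' => h'.2.not_gt h).1
  have key := indep_increment_fin hmeas hindep ht.monotone ht01 j
  rw [htb, hta] at key
  refine indep_of_indep_of_le_left key
    (iSup₂_le fun s hs => le_iSup_of_le (e.symm ⟨s, hs⟩) (le_of_eq ?_))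
  have hle : e.symm ⟨s, hs⟩ ≤ j.castSucc ↔ s ≤ b := by rw [hj, OrderIso.le_iff_le]; rfl
  have hanchor : t (if e.symm ⟨s, hs⟩ ≤ j.castSucc then j.castSucc else j.succ)
      = if s ≤ b then b else a := by
    rw [apply_ite t, htb, hta]
    exact if_congr hle rfl rfl
  rw [hanchor]
  simp [incrementFromGap, t]

theorem indep_incrementsOffGap [IsProbabilityMeasure P]
    (hmeas : ∀ t ∈ Icc (0:ℝ) 1, Measurable (X t))
    (hindep : HasIndepIncrements P X) {b a : ℝ} (hb : 0 ≤ b) (hba : b < a) (ha : a ≤ 1) :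
    Indep (incrementsOffGap X b a) (MeasurableSpace.comap (X a - X b) inferInstance) P := by
  have hle := incrementsOffGap_le hmeas hb hba ha
  rw [incrementsOffGap, iSup_subtype', iSup_eq_iSup_finset] at hle ⊢
  refine indep_iSup_of_directed_le (fun F => ?_) (fun F => le_iSup_of_le F le_rfl |>.trans hle)
    ((hmeas a ⟨hb.trans hba.le, ha⟩).sub (hmeas b ⟨hb, hba.le.trans ha⟩)).comap_le
    (Monotone.directed_le fun F F' h => biSup_mono h)
  set F' : Finset ℝ := insert b (insert a (F.map (Function.Embedding.subtype _)))
  have hF' : ∀ s ∈ F', s ∈ Icc 0 b ∪ Icc a 1 := by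
    simp only [F', Finset.mem_insert, Finset.mem_map, Function.Embedding.coe_subtype]
    rintro s (rfl | rfl | ⟨s, -, rfl⟩)
    exacts [Or.inl ⟨hb, le_rfl⟩, Or.inr ⟨le_rfl, ha⟩, s.2]
  refine indep_of_indep_of_le_left (indep_increment_finset hmeas hindep hb hba ha
    (by simp [F']) (by simp [F']) hF') (iSup₂_le fun s hs => ?_)
  exact le_iSup₂ (f := fun s (_ : s ∈ F') =>
    MeasurableSpace.comap (incrementFromGap X b a s) inferInstance) (s : ℝ)
    (Finset.mem_insert_of_mem (Finset.mem_insert_of_mem (Finset.mem_map_of_mem _ hs)))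

end HasIndepIncrements

theorem ProbabilityTheory.IndepFun.measure_setOf_eq_eq_zero {Ω : Type*} [MeasurableSpace Ω]
    {P : Measure Ω} [IsFiniteMeasure P] {Y D : Ω → ℝ} (hYD : IndepFun Y D P)
    (hY : Measurable Y) (hD : Measurable D) [NullSingletonClass (P.map D)] :
    P {ω | D ω = Y ω} = 0 := by
  have hdiag : MeasurableSet {p : ℝ × ℝ | p.2 = p.1} :=
    measurableSet_eq_fun measurable_snd measurable_fst
  calc P {ω | D ω = Y ω} = P.map (fun ω => (Y ω, D ω)) {p | p.2 = p.1} :=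
        (Measure.map_apply (hY.prodMk hD) hdiag).symm
    _ = ((P.map Y).prod (P.map D)) {p | p.2 = p.1} := by
        rw [(indepFun_iff_map_prod_eq_prod_map_map hY.aemeasurable hD.aemeasurable).1 hYD]
    _ = ∫⁻ y, P.map D {y} ∂(P.map Y) := Measure.prod_apply hdiag
    _ = 0 := by simp

section DenseInfimum

variable {α ι : Type*} [TopologicalSpace α] [Nonempty ι] {s : Set α} {f : α → ℝ} {u : ι → s}

theorem ContinuousOn.ciInf_comp_eq_csInf_image (hf : ContinuousOn f s) (hs : IsCompact s)
    (hu : DenseRange u) : ⨅ i, f (u i) = sInf (f '' s) := by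
  have hbdd : BddBelow (f '' s) := (hs.image_of_continuousOn hf).bddBelow
  refine le_antisymm (le_csInf ⟨_, mem_image_of_mem f (u (Classical.arbitrary ι)).2⟩ ?_)
    (le_ciInf fun i => csInf_le hbdd (mem_image_of_mem f (u i).2))
  rintro _ ⟨x, hx, rfl⟩
  exact hu.induction_on (p := fun y : s => ⨅ i, f (u i) ≤ f y) ⟨x, hx⟩
    (isClosed_le continuous_const hf.domRestrict)
    (ciInf_le (hbdd.mono (range_subset_iff.2 fun i => mem_image_of_mem f (u i).2)))

theorem ContinuousOn.ciInf_comp_sub_eq_csInf_image_sub (hf : ContinuousOn f s)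
    (hs : IsCompact s) (hu : DenseRange u) (c : ℝ) :
    ⨅ i, (f (u i) - c) = sInf (f '' s) - c := by
  have hne : s.Nonempty := ⟨_, (u (Classical.arbitrary ι)).2⟩
  rw [Monotone.map_csInf_of_continuousAt (continuous_sub_right c).continuousAt
    (fun _ _ h => sub_le_sub_right h c) (hne.image f) (hs.image_of_continuousOn hf).bddBelow,
    image_image]
  exact (hf.sub continuousOn_const).ciInf_comp_eq_csInf_image hs hu

end DenseInfimum

/-- For a process with independent, non-atomic increments and a.s. continuous paths,
the infima over two disjoint closed subintervals of `[0,1]` almost surely differ. -/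
theorem stmt_2 {Ω : Type*} [MeasurableSpace Ω] (P : Measure Ω) [IsProbabilityMeasure P]
    (X : ℝ → Ω → ℝ) (hmeas : ∀ t ∈ Set.Icc (0:ℝ) 1, Measurable (X t))
    (hindep : HasIndepIncrements P X)
    (hatom : ∀ a b : ℝ, 0 ≤ a → a < b → b ≤ 1 →
      ∀ x : ℝ, P.map (fun ω => X b ω - X a ω) {x} = 0)
    (hcont : ∀ᵐ ω ∂P, ContinuousOn (fun t => X t ω) (Set.Icc 0 1))
    (a₁ b₁ a₂ b₂ : ℝ) (h0 : 0 ≤ a₁) (h₁ : a₁ ≤ b₁) (h₂ : b₁ < a₂) (h₃ : a₂ ≤ b₂)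
    (h₄ : b₂ ≤ 1) :
    ∀ᵐ ω ∂P,
      sInf ((fun t => X t ω) '' Set.Icc a₁ b₁) ≠
        sInf ((fun t => X t ω) '' Set.Icc a₂ b₂) := by
  have hb₁ : 0 ≤ b₁ := h0.trans h₁
  have ha₂ : a₂ ≤ 1 := h₃.trans h₄
  have : Nonempty (Icc a₁ b₁) := (nonempty_Icc.2 h₁).to_subtype
  have : Nonempty (Icc a₂ b₂) := (nonempty_Icc.2 h₃).to_subtype
  set u₁ := TopologicalSpace.denseSeq (Icc a₁ b₁)
  set u₂ := TopologicalSpace.denseSeq (Icc a₂ b₂)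
  set Y : Ω → ℝ := fun ω => (⨅ n, (X (u₁ n) ω - X b₁ ω)) - ⨅ n, (X (u₂ n) ω - X a₂ ω)
  have hY : Measurable[incrementsOffGap X b₁ a₂] Y :=
    (Measurable.iInf fun n => measurable_incrementsOffGap_sub_left
        ⟨h0.trans (u₁ n).2.1, (u₁ n).2.2⟩).sub
      (Measurable.iInf fun n => measurable_incrementsOffGap_sub_right h₂
        ⟨(u₂ n).2.1, (u₂ n).2.2.trans h₄⟩)
  have hYD : IndepFun Y (fun ω => X a₂ ω - X b₁ ω) P :=
    (IndepFun_iff_Indep _ _ _).2 (indep_of_indep_of_le_left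
      (hindep.indep_incrementsOffGap hmeas hb₁ h₂ ha₂) hY.comap_le)
  have : NullSingletonClass (P.map fun ω => X a₂ ω - X b₁ ω) := ⟨hatom b₁ a₂ hb₁ h₂ ha₂⟩
  have hnull := hYD.measure_setOf_eq_eq_zero (hY.mono (incrementsOffGap_le hmeas hb₁ h₂ ha₂) le_rfl)
    ((hmeas a₂ ⟨hb₁.trans h₂.le, ha₂⟩).sub (hmeas b₁ ⟨hb₁, h₂.le.trans ha₂⟩))
  filter_upwards [hcont, measure_eq_zero_iff_ae_notMem.1 hnull] with ω hc hne heq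
  refine hne ?_
  dsimp only [Y]
  rw [(hc.mono (Icc_subset_Icc h0 (h₂.le.trans ha₂))).ciInf_comp_sub_eq_csInf_image_sub
      isCompact_Icc (TopologicalSpace.denseRange_denseSeq _),
    (hc.mono (Icc_subset_Icc (hb₁.trans h₂.le) h₄)).ciInf_comp_sub_eq_csInf_image_sub
      isCompact_Icc (TopologicalSpace.denseRange_denseSeq _), heq]
  ring
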